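/- If H is a finitely generated nilpotent group, then gap(H) = 0, i.e. the minimal number of ZH-module generators of the augmentation ideal ΔH equals the minimal number of group generators of H; moreover ΔH is a Swan module, and when H/H' is torsion free every prime is a ΔH-prime. -/

import Mathlib

noncomputable section

/-- The integral group ring ℤG. -/
abbrev ZG (G : Type*) [Group G] : Type _ := MonoidAlgebra ℤ G

/-- `dMod R M` is the minimal number of generators of `M` as an `R`-module. -/
def dMod (R M : Type*) [Ring R] [AddCommGroup M] [Module R M] : ℕ :=
  sInf {n | ∃ s : Finset M, s.card = n ∧ Submodule.span R (s : Set M) = ⊤}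

/-- The submodule `pM` of `M`. -/
def pMul (R M : Type*) [Ring R] [AddCommGroup M] [Module R M] (p : ℕ) : Submodule R M :=
  Submodule.span R {x : M | ∃ m : M, x = p • m}

/-- `dModP R M p` is the minimal number of generators of `M/pM` as an `R`-module. -/
def dModP (R M : Type*) [Ring R] [AddCommGroup M] [Module R M] (p : ℕ) : ℕ :=
  dMod R (M ⧸ pMul R M p)

/-- Minimal number of generators of the group `G`. -/
def dGrp (G : Type*) [Group G] : ℕ :=
  sInf {n | ∃ s : Finset G, s.card = n ∧ Subgroup.closure (s : Set G) = ⊤}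

/-- The augmentation ideal ΔG of ℤG: the kernel of the augmentation map ℤG → ℤ. -/
def aug (G : Type*) [Group G] : Ideal (ZG G) :=
  RingHom.ker ((MonoidAlgebra.lift ℤ ℤ G (1 : G →* ℤ)) : ZG G →ₐ[ℤ] ℤ).toRingHom

/-- `d_G(ΔG)`, minimal number of ℤG-module generators of the augmentation ideal. -/
def dAug (G : Type*) [Group G] : ℕ := dMod (ZG G) (aug G)

/-- `d_G(ΔG/pΔG)`. -/
def dAugP (G : Type*) [Group G] (p : ℕ) : ℕ := dModP (ZG G) (aug G) p

/-- The generation gap `gap(G) = d(G) - d_G(ΔG)` (as an integer). -/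
def gapZ (G : Type*) [Group G] : ℤ := (dGrp G : ℤ) - (dAug G : ℤ)

/-- `p` is a ΔG-prime: a prime with `d_G(ΔG) = d_G(ΔG/pΔG)`. -/
def IsAugPrime (G : Type*) [Group G] (p : ℕ) : Prop := p.Prime ∧ dAug G = dAugP G p

/-- ΔG is a Swan module: some prime is a ΔG-prime. -/
def AugSwan (G : Type*) [Group G] : Prop := ∃ p, IsAugPrime G p

/-- Torsion-free monoid (the removed Mathlib notion, with its old meaning). -/
def Monoid.IsTorsionFree (G : Type*) [Monoid G] : Prop := ∀ g : G, g ≠ 1 → ¬IsOfFinOrder g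

/-!
The elements `g - 1`, for `g` in a generating set of `H`, generate `ΔH`, so
`d_H(ΔH/pΔH) ≤ d_H(ΔH) ≤ d(H)`. Conversely `∑ x_g g ↦ ∑ x_g [g]` maps `ΔH` onto `Hᵃᵇ`,
semilinearly along the augmentation, so `ΔH/pΔH` maps onto the `𝔽_p`-space `Hᵃᵇ/p` and
`dim_{𝔽_p} Hᵃᵇ/p ≤ d_H(ΔH/pΔH)`. A finitely generated abelian group
`A ≅ ℤⁿ ⊕ ⨁ ℤ/q_i^{k_i}` is generated by `dim_{𝔽_p} A/pA` elements when `p` occurs most often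
among the `q_i`: sort the cyclic factors into that many groups of factors with distinct primes,
each of which is cyclic by the Chinese remainder theorem. If `A` is torsion free this holds for
every `p`. Finally, in a nilpotent group lifts of generators of `Hᵃᵇ` generate `H`, so for such
`p` we get `d(H) ≤ d(Hᵃᵇ) ≤ d_H(ΔH/pΔH) ≤ d_H(ΔH) ≤ d(H)`.
-/

theorem exists_card_eq_sInf {α : Type*} {P : Finset α → Prop} (h : ∃ s, P s) :
    ∃ s : Finset α, s.card = sInf {n | ∃ s : Finset α, s.card = n ∧ P s} ∧ P s := by
  obtain ⟨s, hs⟩ := h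
  exact Nat.sInf_mem
    (⟨s.card, s, rfl, hs⟩ : Set.Nonempty {n | ∃ t : Finset α, t.card = n ∧ P t})

section GeneratorCount

variable {R M : Type*} [Ring R] [AddCommGroup M] [Module R M]

theorem dMod_le_card (s : Finset M) (hs : Submodule.span R (s : Set M) = ⊤) :
    dMod R M ≤ s.card :=
  Nat.sInf_le ⟨s, rfl, hs⟩

theorem exists_card_eq_dMod [Module.Finite R M] :
    ∃ s : Finset M, s.card = dMod R M ∧ Submodule.span R (s : Set M) = ⊤ :=
  exists_card_eq_sInf Module.Finite.fg_top

theorem dModP_le_dMod [Module.Finite R M] (p : ℕ) : dModP R M p ≤ dMod R M := by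
  classical
  obtain ⟨s, hcard, hs⟩ := exists_card_eq_dMod (R := R) (M := M)
  have hspan : Submodule.span R (s.image (pMul R M p).mkQ : Set (M ⧸ pMul R M p)) = ⊤ := by
    rw [Finset.coe_image, Submodule.span_image, hs, Submodule.map_top, Submodule.range_mkQ]
  exact hcard ▸ (dMod_le_card _ hspan).trans Finset.card_image_le

theorem finrank_le_dModP [Module.Finite R M] {p : ℕ} [Fact p.Prime] {V : Type*} [AddCommGroup V]
    [Module (ZMod p) V] {σ : R →+* ZMod p} [RingHomSurjective σ] (ψ : M →ₛₗ[σ] V)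
    (hψ : Function.Surjective ψ) : Module.finrank (ZMod p) V ≤ dModP R M p := by
  have hker : pMul R M p ≤ LinearMap.ker ψ := by
    refine Submodule.span_le.mpr ?_
    rintro _ ⟨m, rfl⟩
    simp [← Nat.cast_smul_eq_nsmul (ZMod p)]
  set ψ' := (pMul R M p).liftQ ψ hker
  have hψ' : Function.Surjective ψ' := by
    rw [← LinearMap.range_eq_top, Submodule.range_liftQ, LinearMap.range_eq_top]
    exact hψ
  obtain ⟨s, hcard, hs⟩ := exists_card_eq_dMod (R := R) (M := M ⧸ pMul R M p)
  have hspan :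
      Submodule.span (ZMod p) (Set.range fun x : (s : Set (M ⧸ pMul R M p)) => ψ' x) = ⊤ := by
    rw [← Set.image_eq_range ψ', ← Submodule.map_span, hs, Submodule.map_top,
      LinearMap.range_eq_top.mpr hψ']
  calc Module.finrank (ZMod p) V ≤ Fintype.card (s : Set (M ⧸ pMul R M p)) :=
        finrank_le_of_span_eq_top hspan
    _ = dModP R M p := by simp only [Finset.coe_sort_coe, Fintype.card_coe, hcard]; rfl

end GeneratorCount

theorem dGrp_le_card {G : Type*} [Group G] (s : Finset G)
    (hs : Subgroup.closure (s : Set G) = ⊤) : dGrp G ≤ s.card :=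
  Nat.sInf_le ⟨s, rfl, hs⟩

theorem exists_card_eq_dGrp (G : Type*) [Group G] [hG : Group.FG G] :
    ∃ s : Finset G, s.card = dGrp G ∧ Subgroup.closure (s : Set G) = ⊤ :=
  exists_card_eq_sInf hG.out

section Augmentation

open MonoidAlgebra

variable (G : Type*) [Group G]

def augmentation : ZG G →+* ℤ :=
  ((MonoidAlgebra.lift ℤ ℤ G (1 : G →* ℤ)) : ZG G →ₐ[ℤ] ℤ).toRingHom

variable {G}

theorem mem_aug {x : ZG G} : x ∈ aug G ↔ augmentation G x = 0 := Iff.rfl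

@[simp]
theorem augmentation_single (g : G) (a : ℤ) : augmentation G (single g a) = a := by
  simp [augmentation, MonoidAlgebra.lift_single]

@[simp]
theorem augmentation_of (g : G) : augmentation G (of ℤ G g) = 1 :=
  augmentation_single g 1

theorem of_sub_one_mem_aug (g : G) : of ℤ G g - 1 ∈ aug G := by
  rw [mem_aug, map_sub, augmentation_of, map_one, sub_self]

theorem of_sub_one_mem_span {s : Set G} (hs : Subgroup.closure s = ⊤) (g : G) :
    of ℤ G g - 1 ∈
      Submodule.span (ZG G) ((fun g => of ℤ G g - 1) '' s) := by
  have hg : g ∈ Subgroup.closure s := hs ▸ Subgroup.mem_top g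
  induction hg using Subgroup.closure_induction with
  | mem x hx => exact Submodule.subset_span ⟨x, hx, rfl⟩
  | one => simp only [map_one, sub_self, zero_mem]
  | mul x y _ _ hx hy =>
    have : of ℤ G (x * y) - 1 =
        of ℤ G x • (of ℤ G y - 1) + (of ℤ G x - 1) := by
      rw [map_mul, smul_eq_mul]; noncomm_ring
    rw [this]
    exact add_mem (Submodule.smul_mem _ _ hy) hx
  | inv x _ hx =>
    have : of ℤ G x⁻¹ - 1 = -(of ℤ G x⁻¹ • (of ℤ G x - 1)) := by
      rw [smul_eq_mul, mul_sub, ← map_mul, inv_mul_cancel, map_one, mul_one]; abel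
    rw [this]
    exact neg_mem (Submodule.smul_mem _ _ hx)

theorem span_of_sub_one_eq_aug {s : Set G} (hs : Subgroup.closure s = ⊤) :
    Submodule.span (ZG G) ((fun g => of ℤ G g - 1) '' s) = aug G := by
  refine le_antisymm (Submodule.span_le.mpr ?_) fun x hx => ?_
  · rintro _ ⟨g, -, rfl⟩
    exact of_sub_one_mem_aug g
  · suffices h : ∀ y : ZG G, y - (augmentation G y : ZG G) ∈
        Submodule.span (ZG G) ((fun g => of ℤ G g - 1) '' s) by
      simpa [mem_aug.mp hx] using h x
    intro y
    induction y using MonoidAlgebra.induction_on with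
    | of g => simpa using of_sub_one_mem_span hs g
    | add y z hy hz =>
      convert add_mem hy hz using 1
      push_cast [map_add]; abel
    | smul a y hy =>
      convert Submodule.smul_of_tower_mem _ a hy using 1
      simp [smul_sub, zsmul_eq_mul]

theorem exists_span_aug_eq_top (s : Finset G) (hs : Subgroup.closure (s : Set G) = ⊤) :
    ∃ t : Finset (aug G), t.card ≤ s.card ∧ Submodule.span (ZG G) (t : Set (aug G)) = ⊤ := by
  classical
  refine ⟨s.image fun g => ⟨_, of_sub_one_mem_aug g⟩, Finset.card_image_le, ?_⟩
  apply Submodule.map_injective_of_injective (aug G).injective_subtype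
  rw [Submodule.map_span, Submodule.map_top, Submodule.range_subtype, Finset.coe_image,
    ← Set.image_comp]
  exact span_of_sub_one_eq_aug hs

instance [Group.FG G] : Module.Finite (ZG G) (aug G) := by
  obtain ⟨s, hs⟩ := Group.FG.out (G := G)
  obtain ⟨t, -, ht⟩ := exists_span_aug_eq_top s hs
  exact ⟨⟨t, ht⟩⟩

theorem dAug_le_dGrp [Group.FG G] : dAug G ≤ dGrp G := by
  obtain ⟨s, hcard, hs⟩ := exists_card_eq_dGrp G
  obtain ⟨t, hts, ht⟩ := exists_span_aug_eq_top s hs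
  exact (dMod_le_card t ht).trans (hts.trans hcard.le)

theorem dAugP_le_dAug [Group.FG G] (p : ℕ) : dAugP G p ≤ dAug G :=
  dModP_le_dMod p

end Augmentation

section AbelianizationHom

open MonoidAlgebra

variable (G : Type*) [Group G]

/-- `∑ a_g g ↦ ∑ a_g [g]`; on `ΔG` it is the quotient map `ΔG → ΔG/ΔG² ≅ Gᵃᵇ`. -/
def abelianizationHom : ZG G →+ Additive (Abelianization G) :=
  (Finsupp.liftAddHom fun g => zmultiplesHom _ (Additive.ofMul (Abelianization.of g))).comp
    MonoidAlgebra.coeffAddEquiv.toAddMonoidHom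

variable {G}

@[simp]
theorem abelianizationHom_single (g : G) (a : ℤ) :
    abelianizationHom G (single g a) = a • Additive.ofMul (Abelianization.of g) :=
  Finsupp.liftAddHom_apply_single _ g a

@[simp]
theorem abelianizationHom_of (g : G) :
    abelianizationHom G (of ℤ G g) = Additive.ofMul (Abelianization.of g) := by
  rw [of_apply, abelianizationHom_single, one_smul]

theorem abelianizationHom_of_mul (g : G) (x : ZG G) :
    abelianizationHom G (of ℤ G g * x) =
      augmentation G x • Additive.ofMul (Abelianization.of g) + abelianizationHom G x := by
  induction x using MonoidAlgebra.induction_on with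
  | of h =>
    rw [← map_mul, abelianizationHom_of, abelianizationHom_of, augmentation_of, one_smul, map_mul,
      ofMul_mul]
  | add x y hx hy => rw [mul_add, map_add, map_add, hx, hy, map_add, add_smul]; abel
  | smul a x hx =>
    rw [mul_smul_comm, map_zsmul, hx, map_zsmul, map_zsmul, smul_add, smul_eq_mul, mul_smul]

theorem abelianizationHom_mul_of_mem_aug (c : ZG G) {x : ZG G} (hx : x ∈ aug G) :
    abelianizationHom G (c * x) = augmentation G c • abelianizationHom G x := by
  induction c using MonoidAlgebra.induction_on with
  | of g =>
    rw [abelianizationHom_of_mul, mem_aug.mp hx, zero_smul, zero_add, augmentation_of, one_smul]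
  | add c d hc hd => rw [add_mul, map_add, hc, hd, map_add, add_smul]
  | smul a c hc => rw [smul_mul_assoc, map_zsmul, hc, map_zsmul, smul_eq_mul, mul_smul]

theorem exists_mem_aug_abelianizationHom_eq (a : Additive (Abelianization G)) :
    ∃ x ∈ aug G, abelianizationHom G x = a := by
  obtain ⟨g, rfl⟩ := QuotientGroup.mk_surjective (Additive.toMul a)
  refine ⟨_, of_sub_one_mem_aug g, ?_⟩
  rw [map_sub, ← map_one (of ℤ G), abelianizationHom_of, abelianizationHom_of,
    map_one, ofMul_one, sub_zero]
  rfl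

end AbelianizationHom

section Nilpotent

open Subgroup

theorem commutator_le_of_sup_center_eq_top {G : Type*} [Group G] {K : Subgroup G}
    (h : K ⊔ center G = ⊤) : commutator G ≤ K := by
  have : K.Normal := normalizer_eq_top_iff.mp <|
    top_le_iff.mp (h ▸ sup_le le_normalizer (center_le_normalizer _))
  exact Normal.commutator_le_of_self_sup_commutative_eq_top h inferInstance

theorem Group.IsNilpotent.eq_top_of_sup_commutator_eq_top {G : Type*} [Group G]
    [Group.IsNilpotent G] {K : Subgroup G} (h : K ⊔ commutator G = ⊤) : K = ⊤ := by
  suffices ∀ K : Subgroup G, K ⊔ commutator G = ⊤ → K = ⊤ from this K h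
  refine Group.nilpotent_center_quotient_ind
    (P := fun G _ _ => ∀ K : Subgroup G, K ⊔ commutator G = ⊤ → K = ⊤) G
    (fun _ _ _ _ _ => Subsingleton.elim _ _) fun G _ _ ih K hK => ?_
  set π := QuotientGroup.mk' (center G)
  have hπ : Function.Surjective π := QuotientGroup.mk'_surjective _
  have hmap : K.map π = ⊤ := by
    refine ih _ ?_
    rw [_root_.commutator_def, ← map_top_of_surjective π hπ, ← map_commutator, ← Subgroup.map_sup,
      ← _root_.commutator_def, hK]
  have hsup : K ⊔ center G = ⊤ := by
    rw [← QuotientGroup.ker_mk' (center G), ← comap_map_eq, hmap, comap_top]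
  rw [← hK, sup_eq_left.mpr (commutator_le_of_sup_center_eq_top hsup)]

theorem closure_toMul_eq_top_of_span_eq_top {Q : Type*} [CommGroup Q] {t : Set (Additive Q)}
    (ht : Submodule.span ℤ t = ⊤) : Subgroup.closure (Additive.ofMul ⁻¹' t) = ⊤ := by
  rw [← AddSubgroup.toSubgroup'_closure, ← Submodule.span_int_eq_addSubgroupClosure, ht,
    Submodule.top_toAddSubgroup, map_top]

theorem dGrp_le_of_span_abelianization {G : Type*} [Group G] [Group.IsNilpotent G]
    (t : Finset (Additive (Abelianization G)))
    (ht : Submodule.span ℤ (t : Set (Additive (Abelianization G))) = ⊤) : dGrp G ≤ t.card := by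
  classical
  have hof : Function.Surjective (Abelianization.of (G := G)) := QuotientGroup.mk_surjective
  set s := t.image (Function.surjInv hof ∘ Additive.toMul)
  have hs : Abelianization.of '' (s : Set G) = Additive.ofMul ⁻¹' (t : Set _) := by
    ext a
    simp [s, Function.surjInv_eq hof]
  refine (dGrp_le_card s ?_).trans Finset.card_image_le
  apply Group.IsNilpotent.eq_top_of_sup_commutator_eq_top
  rw [← Abelianization.ker_of, ← Subgroup.comap_map_eq, MonoidHom.map_closure, hs,
    closure_toMul_eq_top_of_span_eq_top ht, Subgroup.comap_top]

end Nilpotent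

/-- Encodes `d(A) ≤ dim_{𝔽_p} A/pA`: a surjection `A → 𝔽_p^κ` shows `|κ| ≤ dim_{𝔽_p} A/pA`. -/
def GeneratedByModRank (A : Type*) [AddCommGroup A] (p : ℕ) : Prop :=
  ∃ (s : Finset A) (κ : Type) (_ : Fintype κ) (f : A →+ (κ → ZMod p)),
    s.card ≤ Fintype.card κ ∧ Submodule.span ℤ (s : Set A) = ⊤ ∧ Function.Surjective f

namespace GeneratedByModRank

variable {A B : Type*} [AddCommGroup A] [AddCommGroup B] {p : ℕ}

theorem of_addEquiv (h : GeneratedByModRank B p) (e : A ≃+ B) : GeneratedByModRank A p := by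
  classical
  obtain ⟨s, κ, _, f, hcard, hs, hf⟩ := h
  refine ⟨s.image e.symm, κ, inferInstance, f.comp e.toAddMonoidHom,
    Finset.card_image_le.trans hcard, ?_, hf.comp e.surjective⟩
  have := Submodule.span_image (e.symm.toIntLinearEquiv : B →ₗ[ℤ] A) (s := (s : Set B))
  rw [hs, Submodule.map_top, LinearEquiv.range] at this
  rw [Finset.coe_image]
  exact this

theorem prod (hA : GeneratedByModRank A p) (hB : GeneratedByModRank B p) :
    GeneratedByModRank (A × B) p := by
  classical
  obtain ⟨s, κ, _, f, hs, hsA, hf⟩ := hA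
  obtain ⟨t, κ', _, g, ht, htB, hg⟩ := hB
  refine ⟨s.image (LinearMap.inl ℤ A B) ∪ t.image (LinearMap.inr ℤ A B), κ ⊕ κ', inferInstance,
    (RingEquiv.sumArrowEquivProdArrow κ κ' (ZMod p)).symm.toAddEquiv.toAddMonoidHom.comp
      (f.prodMap g), ?_, ?_, ?_⟩
  · rw [Fintype.card_sum]
    exact (Finset.card_union_le _ _).trans
      (add_le_add (Finset.card_image_le.trans hs) (Finset.card_image_le.trans ht))
  · rw [Finset.coe_union, Finset.coe_image, Finset.coe_image, Submodule.span_union,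
      Submodule.span_image, Submodule.span_image, hsA, htB, Submodule.map_top, Submodule.map_top,
      LinearMap.sup_range_inl_inr]
  · exact (RingEquiv.sumArrowEquivProdArrow κ κ' (ZMod p)).symm.surjective.comp (hf.prodMap hg)

theorem of_basis {κ : Type} [Fintype κ] (b : Module.Basis κ ℤ A) (p : ℕ) :
    GeneratedByModRank A p := by
  classical
  refine ⟨Finset.univ.image b, κ, inferInstance,
    (AddMonoidHom.compLeft (Int.castAddHom (ZMod p)) κ).comp b.equivFun.toAddMonoidHom,
    Finset.card_image_le, ?_, ZMod.intCast_surjective.comp_left.comp b.equivFun.surjective⟩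
  rw [Finset.coe_image, Finset.coe_univ, Set.image_univ, b.span_eq]

end GeneratedByModRank

section ZModProduct

variable {ι : Type*} [DecidableEq ι] {N : ι → ℕ}

theorem exists_nsmul_indicator_eq_single {S : Finset ι} {i : ι} (hi : i ∈ S)
    (hcop : ∀ j ∈ S, j ≠ i → (N i).Coprime (N j)) :
    ∃ c : ℕ, c • (fun j => if j ∈ S then 1 else 0 : Π j, ZMod (N j)) = Pi.single i 1 := by
  have hM : (N i).Coprime (∏ j ∈ S.erase i, N j) := Nat.Coprime.prod_right fun j hj =>
    hcop j (Finset.mem_of_mem_erase hj) (Finset.ne_of_mem_erase hj)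
  obtain ⟨c, hc1, hc0⟩ := Nat.chineseRemainder hM 1 0
  refine ⟨c, funext fun j => ?_⟩
  by_cases hji : j = i
  · subst hji
    simp [hi, (ZMod.natCast_eq_natCast_iff _ _ _).mpr hc1]
  · by_cases hj : j ∈ S
    · have hdvd : N j ∣ c := (Finset.dvd_prod_of_mem N (Finset.mem_erase.mpr ⟨hji, hj⟩)).trans
        (Nat.modEq_zero_iff_dvd.mp hc0)
      simp [hji, hj, (ZMod.natCast_eq_zero_iff _ _).mpr hdvd]
    · simp [hji, hj]

theorem span_range_indicator_eq_top [Fintype ι] {σ : Type*} [DecidableEq σ] (slot : ι → σ)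
    (hslot : ∀ i j, slot i = slot j → i ≠ j → (N i).Coprime (N j)) :
    Submodule.span ℤ (Set.range fun c : σ =>
      (fun i => if slot i = c then 1 else 0 : Π i, ZMod (N i))) = ⊤ := by
  refine eq_top_iff.mpr fun x _ => ?_
  rw [← Finset.univ_sum_single x]
  refine Submodule.sum_mem _ fun i _ => ?_
  obtain ⟨c, hc⟩ := exists_nsmul_indicator_eq_single (N := N)
    (S := Finset.univ.filter (slot · = slot i)) (by simp)
    (fun j hj hji => hslot i j (by simpa using (Finset.mem_filter.mp hj).2.symm) (Ne.symm hji))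
  have hsingle : Pi.single i 1 ∈ Submodule.span ℤ (Set.range fun c : σ =>
      (fun i => if slot i = c then 1 else 0 : Π i, ZMod (N i))) := by
    rw [← hc]
    refine Submodule.smul_of_tower_mem _ c (Submodule.subset_span ⟨slot i, funext fun j => ?_⟩)
    simp
  rw [← ZMod.intCast_zmod_cast (x i), ← zsmul_one, Pi.single_smul]
  exact Submodule.smul_of_tower_mem _ _ hsingle

end ZModProduct

theorem GeneratedByModRank.pi_zmod {ι σ : Type} [Fintype ι] [Fintype σ] (N : ι → ℕ) (p : ℕ)
    (slot : ι → σ) (hslot : ∀ i j, slot i = slot j → i ≠ j → (N i).Coprime (N j))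
    (hσ : Fintype.card σ ≤ Fintype.card {i // p ∣ N i}) :
    GeneratedByModRank (Π i, ZMod (N i)) p := by
  classical
  let f : (Π i, ZMod (N i)) →+ ({i // p ∣ N i} → ZMod p) :=
    AddMonoidHom.pi fun j =>
      (ZMod.castHom j.2 (ZMod p)).toAddMonoidHom.comp (Pi.evalAddMonoidHom _ j.1)
  have hf : Function.Surjective f := fun v => by
    refine ⟨fun i => if h : p ∣ N i then (((v ⟨i, h⟩).cast : ℤ) : ZMod (N i)) else 0,
      funext fun j => ?_⟩
    change ZMod.castHom j.2 (ZMod p) (dite _ _ _) = v j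
    rw [dif_pos j.2, map_intCast, ZMod.intCast_zmod_cast]
  refine ⟨Finset.univ.image fun c : σ => (fun i => if slot i = c then 1 else 0 : Π i, ZMod (N i)),
    {i // p ∣ N i}, inferInstance, f, Finset.card_image_le.trans hσ, ?_, hf⟩
  rw [Finset.coe_image, Finset.coe_univ, Set.image_univ]
  exact span_range_indicator_eq_top slot hslot

theorem exists_injOn_fibers_to_fiber {ι β : Type*} [Fintype ι] [DecidableEq β] (q : ι → β) (b : β)
    (hb : ∀ c, Fintype.card {i // q i = c} ≤ Fintype.card {i // q i = b}) :
    ∃ slot : ι → {i // q i = b}, ∀ i j, slot i = slot j → q i = q j → i = j := by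
  let e c : {i // q i = c} ↪ {i // q i = b} := (Function.Embedding.nonempty_of_card_le (hb c)).some
  refine ⟨fun i => e (q i) ⟨i, rfl⟩, fun i j hij hq => ?_⟩
  have hj : ∀ c (h : q j = c), e c ⟨j, h⟩ = e (q j) ⟨j, rfl⟩ := by rintro c rfl; rfl
  dsimp only at hij
  rw [← hj (q i) hq.symm] at hij
  exact congrArg Subtype.val ((e (q i)).injective hij)

theorem exists_prime_forall_card_fiber_le {ι : Type*} [Fintype ι] {q : ι → ℕ}
    (hq : ∀ i, (q i).Prime) :
    ∃ p, p.Prime ∧ ∀ c, Fintype.card {i // q i = c} ≤ Fintype.card {i // q i = p} := by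
  rcases isEmpty_or_nonempty ι with hι | hι
  · exact ⟨2, Nat.prime_two, fun c => by simp⟩
  obtain ⟨i₀, -, hmax⟩ := Finset.exists_max_image Finset.univ
    (fun i => Fintype.card {j // q j = q i}) Finset.univ_nonempty
  refine ⟨q i₀, hq i₀, fun c => ?_⟩
  by_cases hc : ∃ i, q i = c
  · obtain ⟨i, rfl⟩ := hc
    exact hmax i (Finset.mem_univ i)
  · have : IsEmpty {i // q i = c} := ⟨fun i => hc ⟨i, i.2⟩⟩
    simp

theorem GeneratedByModRank.free_prod_pi_zmod {ι : Type} [Fintype ι] (n : ℕ) {q k : ι → ℕ}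
    (hq : ∀ i, (q i).Prime) (hk : ∀ i, k i ≠ 0) {p : ℕ}
    (hp : ∀ c, Fintype.card {i // q i = c} ≤ Fintype.card {i // q i = p}) :
    GeneratedByModRank ((Fin n →₀ ℤ) × Π i, ZMod (q i ^ k i)) p := by
  classical
  obtain ⟨slot, hslot⟩ := exists_injOn_fibers_to_fiber q p hp
  refine (of_basis Finsupp.basisSingleOne p).prod (pi_zmod _ p slot (fun i j hij hne => ?_) ?_)
  · exact Nat.Coprime.pow _ _
      ((Nat.coprime_primes (hq i) (hq j)).mpr fun h => hne (hslot i j hij h))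
  · exact Fintype.card_subtype_mono _ _ fun i (hi : q i = p) => hi ▸ dvd_pow_self _ (hk i)

def piAddEquivPiSubtypeOfSubsingleton {ι : Type*} (M : ι → Type*) [∀ i, AddGroup (M i)]
    (P : ι → Prop) [DecidablePred P] (h : ∀ i, ¬P i → Subsingleton (M i)) :
    (Π i, M i) ≃+ Π j : Subtype P, M j where
  toFun x j := x j
  invFun y i := if hi : P i then y ⟨i, hi⟩ else 0
  left_inv x := funext fun i => by
    by_cases hi : P i
    · simp [hi]
    · exact (h i hi).elim _ _
  right_inv y := funext fun j => by simp [j.2]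
  map_add' _ _ := rfl

theorem AddCommGroup.exists_addEquiv_free_prod_pi_zmod (A : Type*) [AddCommGroup A]
    [AddGroup.FG A] :
    ∃ (n : ℕ) (ι : Type) (_ : Fintype ι) (q k : ι → ℕ), (∀ i, (q i).Prime) ∧ (∀ i, k i ≠ 0) ∧
      Nonempty (A ≃+ (Fin n →₀ ℤ) × Π i, ZMod (q i ^ k i)) := by
  classical
  obtain ⟨n, ι, _, q, hq, k, ⟨e⟩⟩ := AddCommGroup.equiv_free_prod_directSum_zmod A
  refine ⟨n, {i // k i ≠ 0}, inferInstance, fun i => q i, fun i => k i, fun i => hq i,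
    fun i => i.2, ⟨e.trans ((AddEquiv.refl _).prodCongr
      ((DirectSum.linearEquivFunOnFintype ℤ ι _).toAddEquiv.trans
        (piAddEquivPiSubtypeOfSubsingleton _ _ fun i hi => ?_)))⟩⟩
  rw [not_not.mp hi, pow_zero]
  infer_instance

theorem AddCommGroup.exists_prime_generatedByModRank (A : Type*) [AddCommGroup A]
    [AddGroup.FG A] : ∃ p, p.Prime ∧ GeneratedByModRank A p := by
  obtain ⟨n, ι, _, q, k, hq, hk, ⟨e⟩⟩ := exists_addEquiv_free_prod_pi_zmod A
  obtain ⟨p, hp, hmax⟩ := exists_prime_forall_card_fiber_le hq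
  exact ⟨p, hp, (GeneratedByModRank.free_prod_pi_zmod n hq hk hmax).of_addEquiv e⟩

theorem GeneratedByModRank.of_isAddTorsionFree (A : Type*) [AddCommGroup A] [AddGroup.FG A]
    [IsAddTorsionFree A] (p : ℕ) : GeneratedByModRank A p := by
  have : Module.Finite ℤ A := Module.Finite.iff_addGroup_fg.mpr ‹_›
  have : Module.IsTorsionFree ℤ A := Module.isTorsionFree_int_iff_isAddTorsionFree.mpr ‹_›
  have : Module.Free ℤ A := Module.free_of_finite_type_torsion_free'
  exact of_basis (Module.finBasis ℤ A) p

theorem dGrp_le_dAugP {G : Type*} [Group G] [Group.FG G] [Group.IsNilpotent G] {p : ℕ}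
    [Fact p.Prime] (h : GeneratedByModRank (Additive (Abelianization G)) p) :
    dGrp G ≤ dAugP G p := by
  obtain ⟨s, κ, _, f, hcard, hs, hf⟩ := h
  let σ : ZG G →+* ZMod p := (Int.castRingHom (ZMod p)).comp (augmentation G)
  have : RingHomSurjective σ := ⟨fun z => ⟨((z.cast : ℤ) : ZG G), by simp [σ]⟩⟩
  let ψ : aug G →ₛₗ[σ] (κ → ZMod p) :=
    { toFun := fun x => f (abelianizationHom G x)
      map_add' := fun x y => by simp
      map_smul' := fun c x => by
        change f (abelianizationHom G (c * x)) = σ c • f (abelianizationHom G x)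
        rw [abelianizationHom_mul_of_mem_aug c x.2, map_zsmul]
        exact (Int.cast_smul_eq_zsmul (ZMod p) _ _).symm }
  have hψ : Function.Surjective ψ := fun v => by
    obtain ⟨a, rfl⟩ := hf v
    obtain ⟨x, hx, rfl⟩ := exists_mem_aug_abelianizationHom_eq a
    exact ⟨⟨x, hx⟩, rfl⟩
  calc dGrp G ≤ s.card := dGrp_le_of_span_abelianization s hs
    _ ≤ Fintype.card κ := hcard
    _ = Module.finrank (ZMod p) (κ → ZMod p) := (Module.finrank_fintype_fun_eq_card _).symm
    _ ≤ dAugP G p := finrank_le_dModP ψ hψ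

/-- if `H` is a finitely generated nilpotent group then `gap(H) = 0`,
`ΔH` is a Swan module, and when `H/H'` is torsion free every prime is a `ΔH`-prime. -/
theorem stmt4 (H : Type) [Group H] (hH : Group.FG H) [Group.IsNilpotent H] :
    gapZ H = 0 ∧ AugSwan H ∧
      (Monoid.IsTorsionFree (Abelianization H) →
        ∀ p : ℕ, p.Prime → IsAugPrime H p) := by
  have : Group.FG (Abelianization H) :=
    Group.fg_of_surjective (f := Abelianization.of) QuotientGroup.mk_surjective
  have key : ∀ p, p.Prime → GeneratedByModRank (Additive (Abelianization H)) p →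
      dAug H = dGrp H ∧ IsAugPrime H p := by
    intro p hp h
    have : Fact p.Prime := ⟨hp⟩
    have hlow := dGrp_le_dAugP h
    have hup := dAug_le_dGrp (G := H)
    have hmod := dAugP_le_dAug (G := H) p
    exact ⟨by omega, hp, by omega⟩
  obtain ⟨p, hp, hgen⟩ := AddCommGroup.exists_prime_generatedByModRank (Additive (Abelianization H))
  obtain ⟨hd, hpAug⟩ := key p hp hgen
  refine ⟨by rw [gapZ, hd, sub_self], ⟨p, hpAug⟩, fun htf q hq => (key q hq ?_).2⟩
  have : IsMulTorsionFree (Abelianization H) := isMulTorsionFree_iff_not_isOfFinOrder.mpr htf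
  exact .of_isAddTorsionFree _ q
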